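/- arXiv:2601.18455 — 2 statements merged into one kernel-verified Lean document; each statement's English description precedes it below -/
import Mathlib

section
/- Let H be a Berge-K4-free 3-uniform hypergraph and let {v1,v2,v3} be a hyperedge of H with d(v1) ≤ 2. Then the pair (v2,v3) is bad, i.e., there do not exist vertices x,y and five distinct hyperedges e1,...,e5 of H with {v2,x}⊆e1, {v2,y}⊆e2, {v3,x}⊆e3, {v3,y}⊆e4, {x,y}⊆e5. -/
variable {V : Type*} [DecidableEq V]

/-- A Berge-K4 in the hyperedge set `E` with core vertices `a,b,c,d`:
four distinct vertices together with six distinct hyperedges, one assigned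
to each pair of core vertices, each containing its assigned pair. -/
def IsBergeK4Core (E : Finset (Finset V)) (a b c d : V) : Prop :=
  a ≠ b ∧ a ≠ c ∧ a ≠ d ∧ b ≠ c ∧ b ≠ d ∧ c ≠ d ∧
  ∃ fab fac fad fbc fbd fcd : Finset V,
    fab ∈ E ∧ fac ∈ E ∧ fad ∈ E ∧ fbc ∈ E ∧ fbd ∈ E ∧ fcd ∈ E ∧
    ([fab, fac, fad, fbc, fbd, fcd] : List (Finset V)).Nodup ∧
    a ∈ fab ∧ b ∈ fab ∧ a ∈ fac ∧ c ∈ fac ∧ a ∈ fad ∧ d ∈ fad ∧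
    b ∈ fbc ∧ c ∈ fbc ∧ b ∈ fbd ∧ d ∈ fbd ∧ c ∈ fcd ∧ d ∈ fcd

/-- `E` contains a Berge-K4. -/
def IsBergeK4 (E : Finset (Finset V)) : Prop :=
  ∃ a b c d : V, IsBergeK4Core E a b c d

/-- Every hyperedge has exactly 3 vertices. -/
def Is3Uniform (E : Finset (Finset V)) : Prop := ∀ e ∈ E, e.card = 3

/-- The degree of a vertex: the number of hyperedges containing it. -/
def hdeg (E : Finset (Finset V)) (v : V) : ℕ := (E.filter fun e => v ∈ e).card

/-- A 3-uniform Berge-K4-saturated hypergraph on the (finite) vertex type `V`: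
it is 3-uniform, Berge-K4-free, and adding any non-hyperedge (3-element subset
of the vertices not already a hyperedge) creates a Berge-K4. -/
def IsSaturated [Fintype V] (E : Finset (Finset V)) : Prop :=
  Is3Uniform E ∧ ¬ IsBergeK4 E ∧
    ∀ e : Finset V, e.card = 3 → e ∉ E → IsBergeK4 (insert e E)

/-- The pair `(u,v)` is good: there are two further vertices `x,y` (so that
`u,v,x,y` are four distinct vertices) and five distinct hyperedges, one for
each pair among `u,v,x,y` other than `uv`, each containing its assigned pair;
i.e. adding an edge on `{u,v}` completes a Berge-K4 with core `{u,v,x,y}`. -/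
def GoodPair (E : Finset (Finset V)) (u v : V) : Prop :=
  ∃ x y : V, u ≠ v ∧ u ≠ x ∧ u ≠ y ∧ v ≠ x ∧ v ≠ y ∧ x ≠ y ∧
  ∃ eux euy evx evy exy : Finset V,
    eux ∈ E ∧ euy ∈ E ∧ evx ∈ E ∧ evy ∈ E ∧ exy ∈ E ∧
    ([eux, euy, evx, evy, exy] : List (Finset V)).Nodup ∧
    u ∈ eux ∧ x ∈ eux ∧ u ∈ euy ∧ y ∈ euy ∧
    v ∈ evx ∧ x ∈ evx ∧ v ∈ evy ∧ y ∈ evy ∧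
    x ∈ exy ∧ y ∈ exy

theorem length_le_hdeg {E : Finset (Finset V)} {w : V} {l : List (Finset V)} (hl : l.Nodup)
    (hmem : ∀ e ∈ l, e ∈ E ∧ w ∈ e) : l.length ≤ hdeg E w := by
  rw [← List.toFinset_card_of_nodup hl]
  exact Finset.card_le_card fun e he => Finset.mem_filter.2 (hmem e (List.mem_toFinset.1 he))

/-- The Berge-K4 has core `{u, v, x, y}` with `f` assigned to the pair `uv`: each of `x, y` lies in
three of the five hyperedges witnessing the good pair, so neither of them can be in `f`. -/
theorem GoodPair.isBergeK4_of_mem {E : Finset (Finset V)} {u v : V} (hgood : GoodPair E u v)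
    {f : Finset V} (hf : f ∈ E) (hu : u ∈ f) (hv : v ∈ f)
    (hdeg_le : ∀ w ∈ f, w ≠ u → w ≠ v → hdeg E w ≤ 2) : IsBergeK4 E := by
  obtain ⟨x, y, huv, hux, huy, hvx, hvy, hxy, eux, euy, evx, evy, exy,
    hux_E, huy_E, hvx_E, hvy_E, hxy_E, hnd,
    hux_u, hux_x, huy_u, huy_y, hvx_v, hvx_x, hvy_v, hvy_y, hxy_x, hxy_y⟩ := hgood
  have hx : x ∉ f := fun hxf => by
    have h3 : 3 ≤ hdeg E x := length_le_hdeg (l := [eux, evx, exy]) (hnd.sublist (by simp))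
      (by simp [hux_E, hvx_E, hxy_E, hux_x, hvx_x, hxy_x])
    exact absurd (hdeg_le x hxf hux.symm hvx.symm) (by omega)
  have hy : y ∉ f := fun hyf => by
    have h3 : 3 ≤ hdeg E y := length_le_hdeg (l := [euy, evy, exy]) (hnd.sublist (by simp))
      (by simp [huy_E, hvy_E, hxy_E, huy_y, hvy_y, hxy_y])
    exact absurd (hdeg_le y hyf huy.symm hvy.symm) (by omega)
  refine ⟨u, v, x, y, huv, hux, huy, hvx, hvy, hxy, f, eux, euy, evx, evy, exy,
    hf, hux_E, huy_E, hvx_E, hvy_E, hxy_E, List.nodup_cons.2 ⟨?_, hnd⟩,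
    hu, hv, hux_u, hux_x, huy_u, huy_y, hvx_v, hvx_x, hvy_v, hvy_y, hxy_x, hxy_y⟩
  simp only [List.mem_cons, List.not_mem_nil, or_false]
  rintro (rfl | rfl | rfl | rfl | rfl) <;> contradiction

theorem stmt_2_general (E : Finset (Finset V)) (hfree : ¬ IsBergeK4 E)
    (v1 v2 v3 : V)
    (he : ({v1, v2, v3} : Finset V) ∈ E) (hd1 : hdeg E v1 ≤ 2) :
    ¬ GoodPair E v2 v3 := by
  refine fun hgood => hfree (hgood.isBergeK4_of_mem he (by simp) (by simp) ?_)
  intro w hw hw2 hw3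
  obtain rfl : w = v1 := by simpa [hw2, hw3] using hw
  exact hd1

theorem stmt_2 (E : Finset (Finset V)) (h3 : Is3Uniform E) (hfree : ¬ IsBergeK4 E)
    (v1 v2 v3 : V) (h12 : v1 ≠ v2) (h13 : v1 ≠ v3) (h23 : v2 ≠ v3)
    (he : ({v1, v2, v3} : Finset V) ∈ E) (hd1 : hdeg E v1 ≤ 2) :
    ¬ GoodPair E v2 v3 :=
  stmt_2_general E hfree v1 v2 v3 he hd1
end

section
/- Let H be a 3-uniform Berge-K4-saturated hypergraph and suppose two disjoint copies of the gadget T are simultaneously attached on two distinct vertex pairs: copy 1 adds new vertices a1,a2 and hyperedges {a1,a2,u1}, {a1,a2,v1}, and copy 2 adds new vertices a3,a4 and hyperedges {a3,a4,u2}, {a3,a4,v2}, with {u1,v1} ≠ {u2,v2}. Then the resulting hypergraph is not Berge-K4-saturated: in particular, adding the non-hyperedge {a1,a2,a3} creates no Berge-K4. -/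
/-! Hyperedges of `E` lie inside `S`, while each added hyperedge has at most one vertex in `S`,
so a Berge-K4 in the enlarged hypergraph has a new vertex in its core. It is not `a₄`, which has
degree 2. The vertices `a₁, a₂, a₃` have degree 3, so a core vertex among them reaches a second
core vertex among them through `{a₁, a₂, a₃}`. No two of them are core vertices together: `a₁`
and `a₂` share all their hyperedges, leaving no room for the five hyperedges at a core pair, and
`a₁` or `a₂` together with `a₃` would make the other two core vertices common neighbours, i.e.
elements of `{u₁, v₁} ∩ {u₂, v₂}`, which has at most one element. -/

variable {V : Type*} [DecidableEq V]

/-- A Berge-K4-saturated hypergraph with vertex set `S`: 3-uniform with all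
hyperedges inside `S`, Berge-K4-free, and adding any 3-subset of `S` not
already a hyperedge creates a Berge-K4. -/
def IsSaturatedOn (S : Finset V) (E : Finset (Finset V)) : Prop :=
  (∀ e ∈ E, e.card = 3 ∧ e ⊆ S) ∧ ¬ IsBergeK4 E ∧
    ∀ e : Finset V, e ⊆ S → e.card = 3 → e ∉ E → IsBergeK4 (insert e E)

section Degree

variable {E : Finset (Finset V)} {v : V}

theorem hdeg_le_card_of_forall_mem {T : Finset (Finset V)} (h : ∀ f ∈ E, v ∈ f → f ∈ T) :
    hdeg E v ≤ T.card :=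
  Finset.card_le_card fun f hf => h f (Finset.mem_filter.1 hf).1 (Finset.mem_filter.1 hf).2

theorem three_le_hdeg {f₁ f₂ f₃ : Finset V} (h₁ : f₁ ∈ E) (h₂ : f₂ ∈ E) (h₃ : f₃ ∈ E)
    (hv₁ : v ∈ f₁) (hv₂ : v ∈ f₂) (hv₃ : v ∈ f₃)
    (h₁₂ : f₁ ≠ f₂) (h₁₃ : f₁ ≠ f₃) (h₂₃ : f₂ ≠ f₃) : 3 ≤ hdeg E v := by
  rw [← Finset.card_eq_three.2 ⟨f₁, f₂, f₃, h₁₂, h₁₃, h₂₃, rfl⟩]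
  refine Finset.card_le_card fun f hf => Finset.mem_filter.2 ?_
  simp only [Finset.mem_insert, Finset.mem_singleton] at hf
  rcases hf with rfl | rfl | rfl <;> simp_all

theorem eq_or_eq_or_eq_of_hdeg_le_three {f₁ f₂ f₃ f : Finset V} (hdeg : hdeg E v ≤ 3)
    (h₁ : f₁ ∈ E) (h₂ : f₂ ∈ E) (h₃ : f₃ ∈ E) (hv₁ : v ∈ f₁) (hv₂ : v ∈ f₂) (hv₃ : v ∈ f₃)
    (h₁₂ : f₁ ≠ f₂) (h₁₃ : f₁ ≠ f₃) (h₂₃ : f₂ ≠ f₃) (hf : f ∈ E) (hvf : v ∈ f) :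
    f = f₁ ∨ f = f₂ ∨ f = f₃ := by
  have hsub : ({f₁, f₂, f₃} : Finset (Finset V)) ⊆ E.filter (v ∈ ·) := by
    intro g hg
    simp only [Finset.mem_insert, Finset.mem_singleton] at hg
    rcases hg with rfl | rfl | rfl <;> simp_all
  have hcard : (E.filter (v ∈ ·)).card ≤ ({f₁, f₂, f₃} : Finset (Finset V)).card := by
    rw [Finset.card_eq_three.2 ⟨f₁, f₂, f₃, h₁₂, h₁₃, h₂₃, rfl⟩]
    exact hdeg
  have := (Finset.eq_of_subset_of_card_le hsub hcard).symm ▸ Finset.mem_filter.2 ⟨hf, hvf⟩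
  simpa using this

end Degree

namespace IsBergeK4Core

variable {E : Finset (Finset V)} {a b c d : V}

theorem swap₁₂ (h : IsBergeK4Core E a b c d) : IsBergeK4Core E b a c d := by
  obtain ⟨hab, hac, had, hbc, hbd, hcd, fab, fac, fad, fbc, fbd, fcd, h⟩ := h
  exact ⟨hab.symm, hbc, hbd, hac, had, hcd, fab, fbc, fbd, fac, fad, fcd, by grind⟩

theorem swap₂₃ (h : IsBergeK4Core E a b c d) : IsBergeK4Core E a c b d := by
  obtain ⟨hab, hac, had, hbc, hbd, hcd, fab, fac, fad, fbc, fbd, fcd, h⟩ := h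
  exact ⟨hac, hab, had, hbc.symm, hcd, hbd, fac, fab, fad, fbc, fcd, fbd, by grind⟩

theorem swap₃₄ (h : IsBergeK4Core E a b c d) : IsBergeK4Core E a b d c := by
  obtain ⟨hab, hac, had, hbc, hbd, hcd, fab, fac, fad, fbc, fbd, fcd, h⟩ := h
  exact ⟨hab, had, hac, hbd, hbc, hcd.symm, fab, fad, fac, fbd, fbc, fcd, by grind⟩

theorem exists_of_mem {x : V} (h : IsBergeK4Core E a b c d)
    (hx : x ∈ ({a, b, c, d} : Finset V)) : ∃ b' c' d', IsBergeK4Core E x b' c' d' := by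
  simp only [Finset.mem_insert, Finset.mem_singleton] at hx
  rcases hx with rfl | rfl | rfl | rfl
  exacts [⟨_, _, _, h⟩, ⟨_, _, _, h.swap₁₂⟩, ⟨_, _, _, h.swap₂₃.swap₁₂⟩,
    ⟨_, _, _, h.swap₃₄.swap₂₃.swap₁₂⟩]

theorem exists_of_mem_of_mem {x y : V} (h : IsBergeK4Core E a b c d)
    (hx : x ∈ ({a, b, c, d} : Finset V)) (hy : y ∈ ({a, b, c, d} : Finset V)) (hxy : x ≠ y) :
    ∃ c' d', IsBergeK4Core E x y c' d' := by
  simp only [Finset.mem_insert, Finset.mem_singleton] at hx hy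
  rcases hx with rfl | rfl | rfl | rfl <;> rcases hy with rfl | rfl | rfl | rfl <;>
    first
    | exact absurd rfl hxy
    | exact ⟨_, _, h⟩
    | exact ⟨_, _, h.swap₁₂⟩
    | exact ⟨_, _, h.swap₂₃⟩
    | exact ⟨_, _, h.swap₃₄.swap₂₃⟩
    | exact ⟨_, _, h.swap₁₂.swap₂₃⟩
    | exact ⟨_, _, h.swap₁₂.swap₃₄.swap₂₃⟩
    | exact ⟨_, _, h.swap₂₃.swap₁₂⟩
    | exact ⟨_, _, h.swap₂₃.swap₁₂.swap₂₃⟩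
    | exact ⟨_, _, h.swap₂₃.swap₁₂.swap₃₄.swap₂₃⟩
    | exact ⟨_, _, h.swap₃₄.swap₂₃.swap₁₂⟩
    | exact ⟨_, _, h.swap₃₄.swap₂₃.swap₁₂.swap₂₃⟩
    | exact ⟨_, _, h.swap₃₄.swap₂₃.swap₁₂.swap₃₄.swap₂₃⟩

theorem three_le_hdeg (h : IsBergeK4Core E a b c d) : 3 ≤ hdeg E a := by
  obtain ⟨-, -, -, -, -, -, fab, fac, fad, _, _, _, hab, hac, had, -, -, -, hnd,
    hab', -, hac', -, had', -⟩ := h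
  exact _root_.three_le_hdeg hab hac had hab' hac' had' (by grind) (by grind) (by grind)

theorem mem_of_hdeg_le_three {f : Finset V} (h : IsBergeK4Core E a b c d) (hdeg : hdeg E a ≤ 3)
    (hf : f ∈ E) (haf : a ∈ f) : b ∈ f ∨ c ∈ f ∨ d ∈ f := by
  obtain ⟨-, -, -, -, -, -, fab, fac, fad, _, _, _, hab, hac, had, -, -, -, hnd,
    hab', hb, hac', hc, had', hd, -⟩ := h
  rcases eq_or_eq_or_eq_of_hdeg_le_three hdeg hab hac had hab' hac' had'
    (by grind) (by grind) (by grind) hf haf with rfl | rfl | rfl <;> simp_all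

theorem exists_mem_not_mem_of_hdeg_le_three (h : IsBergeK4Core E a b c d)
    (hdeg : hdeg E a ≤ 3) : ∃ f ∈ E, b ∈ f ∧ a ∉ f := by
  obtain ⟨-, -, -, -, -, -, fab, fac, fad, fbc, _, _, hab, hac, had, hbc, -, -, hnd,
    hab', -, hac', -, had', -, hb, -⟩ := h
  refine ⟨fbc, hbc, hb, fun ha => ?_⟩
  rcases eq_or_eq_or_eq_of_hdeg_le_three hdeg hab hac had hab' hac' had'
    (by grind) (by grind) (by grind) hbc ha with rfl | rfl | rfl <;> simp_all

theorem pair_subset_inter {e₀ A B : Finset V} (h : IsBergeK4Core E a b c d)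
    (hA : ∀ f ∈ E, a ∈ f → f ≠ e₀ → f ⊆ A) (hB : ∀ f ∈ E, b ∈ f → f ≠ e₀ → f ⊆ B)
    (hbA : b ∉ A) : ({c, d} : Finset V) ⊆ A ∩ B := by
  obtain ⟨-, -, -, -, -, -, fab, fac, fad, fbc, fbd, _, hab, hac, had, hbc, hbd, -, hnd,
    ha₁, hb₁, ha₂, hc₂, ha₃, hd₃, hb₄, hc₄, hb₅, hd₅, -⟩ := h
  obtain rfl : fab = e₀ := by
    by_contra hne
    exact hbA (hA fab hab ha₁ hne hb₁)
  intro x hx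
  simp only [Finset.mem_insert, Finset.mem_singleton] at hx
  rcases hx with rfl | rfl
  · exact Finset.mem_inter.2 ⟨hA fac hac ha₂ (by grind) hc₂, hB fbc hbc hb₄ (by grind) hc₄⟩
  · exact Finset.mem_inter.2 ⟨hA fad had ha₃ (by grind) hd₃, hB fbd hbd hb₅ (by grind) hd₅⟩

theorem exists_mem_of_not_isBergeK4 {F : Finset (Finset V)} {N : Finset V}
    (h : IsBergeK4Core F a b c d) (hE : ¬ IsBergeK4 E)
    (hF : ∀ f ∈ F, f ∉ E → ∃ w, f ⊆ insert w N) : ∃ x ∈ ({a, b, c, d} : Finset V), x ∈ N := by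
  by_contra! hout
  simp only [Finset.mem_insert, Finset.mem_singleton, forall_eq_or_imp, forall_eq] at hout
  have mem : ∀ {x y : V} {f : Finset V}, f ∈ F → x ∈ f → y ∈ f → x ≠ y → x ∉ N → y ∉ N →
      f ∈ E := by
    intro x y f hf hx hy hxy hxN hyN
    by_contra hfE
    obtain ⟨w, hw⟩ := hF f hf hfE
    have hxw := hw hx
    have hyw := hw hy
    simp only [Finset.mem_insert] at hxw hyw
    grind
  obtain ⟨hab, hac, had, hbc, hbd, hcd, fab, fac, fad, fbc, fbd, fcd, h₁, h₂, h₃, h₄, h₅, h₆, hnd,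
    p₁, p₂, p₃, p₄, p₅, p₆, p₇, p₈, p₉, p₁₀, p₁₁, p₁₂⟩ := h
  obtain ⟨ha, hb, hc, hd⟩ := hout
  exact hE ⟨a, b, c, d, hab, hac, had, hbc, hbd, hcd, fab, fac, fad, fbc, fbd, fcd,
    mem h₁ p₁ p₂ hab ha hb, mem h₂ p₃ p₄ hac ha hc, mem h₃ p₅ p₆ had ha hd,
    mem h₄ p₇ p₈ hbc hb hc, mem h₅ p₉ p₁₀ hbd hb hd, mem h₆ p₁₁ p₁₂ hcd hc hd, hnd,
    p₁, p₂, p₃, p₄, p₅, p₆, p₇, p₈, p₉, p₁₀, p₁₁, p₁₂⟩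

end IsBergeK4Core

theorem Finset.pair_eq_of_pair_subset {α : Type*} [DecidableEq α] {x y u v : α} (hxy : x ≠ y)
    (h : ({x, y} : Finset α) ⊆ {u, v}) : ({x, y} : Finset α) = {u, v} :=
  Finset.eq_of_subset_of_card_le h (by rw [Finset.card_pair hxy]; exact Finset.card_le_two)

section TwoGadgets

variable {F : Finset (Finset V)} {a₁ a₂ a₃ a₄ u₁ v₁ u₂ v₂ : V}

theorem not_isBergeK4Core_of_twins {c d : V}
    (h₁₂ : ∀ x ∈ ({a₁, a₂} : Finset V), ∀ f ∈ F, x ∈ f →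
      f ∈ ({{a₁, a₂, a₃}, {a₁, a₂, u₁}, {a₁, a₂, v₁}} : Finset (Finset V))) :
    ¬ IsBergeK4Core F a₁ a₂ c d := by
  intro h
  have hdeg : hdeg F a₁ ≤ 3 :=
    (hdeg_le_card_of_forall_mem (h₁₂ a₁ (by simp))).trans Finset.card_le_three
  obtain ⟨f, hf, ha₂, ha₁⟩ := h.exists_mem_not_mem_of_hdeg_le_three hdeg
  have := h₁₂ a₂ (by simp) f hf ha₂
  simp only [Finset.mem_insert, Finset.mem_singleton] at this
  rcases this with rfl | rfl | rfl <;> simp at ha₁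

theorem not_isBergeK4Core_of_pairs_ne {x c d : V}
    (hdist : ([a₁, a₂, a₃, a₄] : List V).Nodup)
    (hdisj : Disjoint ({a₁, a₂, a₃, a₄} : Finset V) {u₁, v₁, u₂, v₂})
    (hpairs : ({u₁, v₁} : Finset V) ≠ {u₂, v₂})
    (h₁₂ : ∀ x ∈ ({a₁, a₂} : Finset V), ∀ f ∈ F, x ∈ f →
      f ∈ ({{a₁, a₂, a₃}, {a₁, a₂, u₁}, {a₁, a₂, v₁}} : Finset (Finset V)))
    (h₃ : ∀ f ∈ F, a₃ ∈ f →
      f ∈ ({{a₁, a₂, a₃}, {a₃, a₄, u₂}, {a₃, a₄, v₂}} : Finset (Finset V)))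
    (hx : x ∈ ({a₁, a₂} : Finset V)) : ¬ IsBergeK4Core F x a₃ c d := by
  intro h
  simp only [List.nodup_cons, List.mem_cons, List.not_mem_nil, or_false, not_or,
    List.nodup_nil, Finset.disjoint_insert_left, Finset.disjoint_singleton_left,
    Finset.mem_insert, Finset.mem_singleton] at hdist hdisj
  have hA : ∀ f ∈ F, x ∈ f → f ≠ {a₁, a₂, a₃} → f ⊆ {a₁, a₂, u₁, v₁} := by
    intro f hf hxf hne
    have := h₁₂ x hx f hf hxf
    simp only [Finset.mem_insert, Finset.mem_singleton] at this
    rcases this with rfl | rfl | rfl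
    exacts [absurd rfl hne, by simp [Finset.insert_subset_iff], by simp [Finset.insert_subset_iff]]
  have hB : ∀ f ∈ F, a₃ ∈ f → f ≠ {a₁, a₂, a₃} → f ⊆ {a₃, a₄, u₂, v₂} := by
    intro f hf hxf hne
    have := h₃ f hf hxf
    simp only [Finset.mem_insert, Finset.mem_singleton] at this
    rcases this with rfl | rfl | rfl
    exacts [absurd rfl hne, by simp [Finset.insert_subset_iff], by simp [Finset.insert_subset_iff]]
  have ha₃ : a₃ ∉ ({a₁, a₂, u₁, v₁} : Finset V) := by
    simp only [Finset.mem_insert, Finset.mem_singleton]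
    grind
  have hcd : ({c, d} : Finset V) ⊆ {u₁, v₁} ∩ {u₂, v₂} := by
    intro t ht
    have := h.pair_subset_inter hA hB ha₃ ht
    simp only [Finset.mem_inter, Finset.mem_insert, Finset.mem_singleton] at this ⊢
    grind
  have hne : c ≠ d := h.2.2.2.2.2.1
  exact hpairs ((Finset.pair_eq_of_pair_subset hne (hcd.trans Finset.inter_subset_left)).symm.trans
    (Finset.pair_eq_of_pair_subset hne (hcd.trans Finset.inter_subset_right)))

theorem not_isBergeK4Core_of_two_mem {a b c d x y : V}
    (hdist : ([a₁, a₂, a₃, a₄] : List V).Nodup)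
    (hdisj : Disjoint ({a₁, a₂, a₃, a₄} : Finset V) {u₁, v₁, u₂, v₂})
    (hpairs : ({u₁, v₁} : Finset V) ≠ {u₂, v₂})
    (h₁₂ : ∀ x ∈ ({a₁, a₂} : Finset V), ∀ f ∈ F, x ∈ f →
      f ∈ ({{a₁, a₂, a₃}, {a₁, a₂, u₁}, {a₁, a₂, v₁}} : Finset (Finset V)))
    (h₃ : ∀ f ∈ F, a₃ ∈ f →
      f ∈ ({{a₁, a₂, a₃}, {a₃, a₄, u₂}, {a₃, a₄, v₂}} : Finset (Finset V)))
    (hx : x ∈ ({a₁, a₂, a₃} : Finset V)) (hy : y ∈ ({a₁, a₂, a₃} : Finset V)) (hxy : x ≠ y)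
    (hxc : x ∈ ({a, b, c, d} : Finset V)) (hyc : y ∈ ({a, b, c, d} : Finset V)) :
    ¬ IsBergeK4Core F a b c d := by
  intro h
  obtain ⟨c', d', h'⟩ := h.exists_of_mem_of_mem hxc hyc hxy
  have twins := not_isBergeK4Core_of_twins (c := c') (d := d') h₁₂
  have hsub : ({a₁, a₂} : Finset V) ⊆ {a₁, a₂, a₃} := by simp [Finset.insert_subset_iff]
  simp only [Finset.mem_insert, Finset.mem_singleton] at hx hy
  rcases hx with rfl | rfl | rfl <;> rcases hy with rfl | rfl | rfl
  all_goals first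
    | exact hxy rfl
    | exact twins h'
    | exact twins h'.swap₁₂
    | exact not_isBergeK4Core_of_pairs_ne hdist hdisj hpairs h₁₂ h₃ (by simp) h'
    | exact not_isBergeK4Core_of_pairs_ne hdist hdisj hpairs h₁₂ h₃ (by simp) h'.swap₁₂

theorem not_isBergeK4_of_incidence {E : Finset (Finset V)} (hE : ¬ IsBergeK4 E)
    (hFE : ∀ f ∈ F, f ∉ E → ∃ w, f ⊆ insert w {a₁, a₂, a₃, a₄})
    (he₀ : {a₁, a₂, a₃} ∈ F)
    (hdist : ([a₁, a₂, a₃, a₄] : List V).Nodup)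
    (hdisj : Disjoint ({a₁, a₂, a₃, a₄} : Finset V) {u₁, v₁, u₂, v₂})
    (hpairs : ({u₁, v₁} : Finset V) ≠ {u₂, v₂})
    (h₁₂ : ∀ x ∈ ({a₁, a₂} : Finset V), ∀ f ∈ F, x ∈ f →
      f ∈ ({{a₁, a₂, a₃}, {a₁, a₂, u₁}, {a₁, a₂, v₁}} : Finset (Finset V)))
    (h₃ : ∀ f ∈ F, a₃ ∈ f →
      f ∈ ({{a₁, a₂, a₃}, {a₃, a₄, u₂}, {a₃, a₄, v₂}} : Finset (Finset V)))
    (h₄ : ∀ f ∈ F, a₄ ∈ f → f ∈ ({{a₃, a₄, u₂}, {a₃, a₄, v₂}} : Finset (Finset V))) :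
    ¬ IsBergeK4 F := by
  rintro ⟨a, b, c, d, h⟩
  obtain ⟨w, hw, hwN⟩ := h.exists_mem_of_not_isBergeK4 hE hFE
  obtain ⟨b', c', d', h'⟩ := h.exists_of_mem hw
  by_cases hw₄ : w = a₄
  · subst hw₄
    have := (hdeg_le_card_of_forall_mem h₄).trans Finset.card_le_two
    linarith [h'.three_le_hdeg]
  have hw' : w ∈ ({a₁, a₂, a₃} : Finset V) := by simp_all
  have hdeg : hdeg F w ≤ 3 := by
    obtain hw₁₂ | rfl : w ∈ ({a₁, a₂} : Finset V) ∨ w = a₃ := by simpa [or_assoc] using hw'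
    · exact (hdeg_le_card_of_forall_mem (h₁₂ w hw₁₂)).trans Finset.card_le_three
    · exact (hdeg_le_card_of_forall_mem h₃).trans Finset.card_le_three
  obtain ⟨y, hyc, hy, hwy⟩ :
      ∃ y ∈ ({w, b', c', d'} : Finset V), y ∈ ({a₁, a₂, a₃} : Finset V) ∧ w ≠ y := by
    rcases h'.mem_of_hdeg_le_three hdeg he₀ hw' with hy | hy | hy
    exacts [⟨b', by simp, hy, h'.1⟩, ⟨c', by simp, hy, h'.2.1⟩, ⟨d', by simp, hy, h'.2.2.1⟩]
  exact not_isBergeK4Core_of_two_mem hdist hdisj hpairs h₁₂ h₃ hw' hy hwy (by simp) hyc h'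

end TwoGadgets

theorem not_isBergeK4_insert_twoGadgets {S : Finset V} {E : Finset (Finset V)}
    {a₁ a₂ a₃ a₄ u₁ v₁ u₂ v₂ : V} (hES : ∀ e ∈ E, e ⊆ S) (hE : ¬ IsBergeK4 E)
    (hdist : ([a₁, a₂, a₃, a₄] : List V).Nodup)
    (hnew : a₁ ∉ S ∧ a₂ ∉ S ∧ a₃ ∉ S ∧ a₄ ∉ S)
    (hu₁ : u₁ ∈ S) (hv₁ : v₁ ∈ S) (hu₂ : u₂ ∈ S) (hv₂ : v₂ ∈ S)
    (hpairs : ({u₁, v₁} : Finset V) ≠ {u₂, v₂}) :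
    ¬ IsBergeK4 (insert {a₁, a₂, a₃}
      (E ∪ {({a₁, a₂, u₁} : Finset V), {a₁, a₂, v₁}, {a₃, a₄, u₂}, {a₃, a₄, v₂}})) := by
  have hdisj : Disjoint ({a₁, a₂, a₃, a₄} : Finset V) {u₁, v₁, u₂, v₂} :=
    Finset.disjoint_of_subset_right (u := S) (by simp [Finset.insert_subset_iff, *])
      (by simp [Finset.disjoint_left, hnew])
  have hout : ∀ x ∉ S, ∀ f ∈ insert {a₁, a₂, a₃}
      (E ∪ {({a₁, a₂, u₁} : Finset V), {a₁, a₂, v₁}, {a₃, a₄, u₂}, {a₃, a₄, v₂}}), x ∈ f →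
      f ∈ ({{a₁, a₂, a₃}, {a₁, a₂, u₁}, {a₁, a₂, v₁}, {a₃, a₄, u₂}, {a₃, a₄, v₂}} :
        Finset (Finset V)) := by
    intro x hx f hf hxf
    simp only [Finset.mem_insert, Finset.mem_union] at hf ⊢
    grind
  refine not_isBergeK4_of_incidence hE ?_ (Finset.mem_insert_self _ _) hdist hdisj hpairs ?_ ?_ ?_
  all_goals simp only [List.nodup_cons, List.mem_cons, List.not_mem_nil, or_false, not_or,
    List.nodup_nil, Finset.disjoint_insert_left, Finset.disjoint_singleton_left,
    Finset.mem_insert, Finset.mem_singleton] at hdist hdisj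
  · intro f hf hfE
    simp only [Finset.mem_insert, Finset.mem_union, Finset.mem_singleton] at hf
    rcases hf with rfl | hf | rfl | rfl | rfl | rfl
    · exact ⟨a₁, by simp [Finset.insert_subset_iff]⟩
    · exact absurd hf hfE
    exacts [⟨u₁, by simp [Finset.insert_subset_iff]⟩, ⟨v₁, by simp [Finset.insert_subset_iff]⟩,
      ⟨u₂, by simp [Finset.insert_subset_iff]⟩, ⟨v₂, by simp [Finset.insert_subset_iff]⟩]
  · intro x hx f hf hxf
    have := hout x (by grind) f hf hxf
    simp only [Finset.mem_insert, Finset.mem_singleton] at this hx ⊢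
    grind
  · intro f hf hxf
    have := hout a₃ hnew.2.2.1 f hf hxf
    simp only [Finset.mem_insert, Finset.mem_singleton] at this ⊢
    grind
  · intro f hf hxf
    have := hout a₄ hnew.2.2.2 f hf hxf
    simp only [Finset.mem_insert, Finset.mem_singleton] at this ⊢
    grind

theorem stmt_6_general (S : Finset V) (E : Finset (Finset V)) (hsat : IsSaturatedOn S E)
    (a1 a2 a3 a4 : V) (hdist : ([a1, a2, a3, a4] : List V).Nodup)
    (hnew : a1 ∉ S ∧ a2 ∉ S ∧ a3 ∉ S ∧ a4 ∉ S)
    (u1 v1 u2 v2 : V) (hu1 : u1 ∈ S) (hv1 : v1 ∈ S) (hu2 : u2 ∈ S) (hv2 : v2 ∈ S)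
    (hpairs : ({u1, v1} : Finset V) ≠ ({u2, v2} : Finset V))
    (E' : Finset (Finset V))
    (hE' : E' = E ∪ {({a1, a2, u1} : Finset V), {a1, a2, v1}, {a3, a4, u2}, {a3, a4, v2}}) :
    ¬ IsBergeK4 (insert ({a1, a2, a3} : Finset V) E') ∧
      ¬ IsSaturatedOn (S ∪ {a1, a2, a3, a4}) E' := by
  obtain ⟨hES, hE, -⟩ := hsat
  have hfree : ¬ IsBergeK4 (insert ({a1, a2, a3} : Finset V) E') :=
    hE' ▸ not_isBergeK4_insert_twoGadgets (fun e he => (hES e he).2) hE hdist hnew hu1 hv1 hu2 hv2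
      hpairs
  refine ⟨hfree, fun ⟨_, _, hadd⟩ => hfree (hadd _ ?_ ?_ ?_)⟩
  · simp [Finset.insert_subset_iff]
  · exact Finset.card_eq_three.2 ⟨a1, a2, a3, by grind, by grind, by grind, rfl⟩
  · intro he
    rw [hE'] at he
    simp only [Finset.mem_union, Finset.mem_insert, Finset.mem_singleton] at he
    rcases he with he | he | he | he | he
    · exact hnew.1 ((hES _ he).2 (by simp))
    all_goals
      have hS : ∀ x ∈ ({a1, a2, a3} : Finset V), x ∉ S := by simp [hnew]
      rw [he] at hS
      simp_all

theorem stmt_6 (S : Finset V) (E : Finset (Finset V)) (hsat : IsSaturatedOn S E)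
    (a1 a2 a3 a4 : V) (hdist : ([a1, a2, a3, a4] : List V).Nodup)
    (hnew : a1 ∉ S ∧ a2 ∉ S ∧ a3 ∉ S ∧ a4 ∉ S)
    (u1 v1 u2 v2 : V) (hu1 : u1 ∈ S) (hv1 : v1 ∈ S) (hu2 : u2 ∈ S) (hv2 : v2 ∈ S)
    (huv1 : u1 ≠ v1) (huv2 : u2 ≠ v2)
    (hpairs : ({u1, v1} : Finset V) ≠ ({u2, v2} : Finset V))
    (E' : Finset (Finset V))
    (hE' : E' = E ∪ {({a1, a2, u1} : Finset V), {a1, a2, v1}, {a3, a4, u2}, {a3, a4, v2}}) :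
    ¬ IsBergeK4 (insert ({a1, a2, a3} : Finset V) E') ∧
      ¬ IsSaturatedOn (S ∪ {a1, a2, a3, a4}) E' :=
  stmt_6_general S E hsat a1 a2 a3 a4 hdist hnew u1 v1 u2 v2 hu1 hv1 hu2 hv2 hpairs E' hE'
end
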